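/- The function Q(x) = 4/(1+x^2) satisfies the soliton profile equation -H(Q')(x) + Q(x) - (1/2)Q(x)^2 = 0 for all x ∈ ℝ. -/

import Mathlib

/-!
For `y ≠ c`, partial fractions give `Q' y / (c - y)` an explicit antiderivative
`A log |y - c| + R y` with `R` smooth. The logarithmic part is even about `c`, so it cancels
in the truncated integral over `{ε ≤ |c - y|}`, which therefore equals the jump of the
antiderivative between `-∞` and `+∞` plus `R (c - ε) - R (c + ε) → 0`. At `±∞` only the `arctan` term of `R`
survives, so the principal value is `π κ` with `κ = 4 (1 - c²) / (1 + c²)²`; hence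
`H(Q')(c) = -κ`, and `κ + Q - Q² / 2 = 0` is an identity of rational functions.
-/

open MeasureTheory Real

/-- The soliton profile. -/
noncomputable def Q (x : ℝ) : ℝ := 4 / (1 + x ^ 2)

/-- The Hilbert transform, `Hf(x) = -(1/π) p.v. ∫ f(y)/(x-y) dy`. -/
noncomputable def hilbertT (f : ℝ → ℝ) (x : ℝ) : ℝ :=
  -(1 / Real.pi) * Filter.limUnder (nhdsWithin 0 (Set.Ioi 0))
    (fun ε : ℝ => ∫ y in {y : ℝ | ε ≤ |x - y|}, f y / (x - y))

open Filter Topology Set Bornology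

lemma setOf_le_abs_sub_eq (c ε : ℝ) :
    {y : ℝ | ε ≤ |c - y|} = Iic (c - ε) ∪ Ici (c + ε) := by
  ext y
  simp only [mem_ofPred_eq, le_abs, mem_union, mem_Iic, mem_Ici]
  constructor <;> rintro (h | h) <;> [left; right; left; right] <;> linarith

lemma integrableOn_div_sub_of_le_abs {f : ℝ → ℝ} (hf : Integrable f) (c : ℝ) {ε : ℝ}
    (hε : 0 < ε) : IntegrableOn (fun y ↦ f y / (c - y)) {y | ε ≤ |c - y|} := by
  have hS : MeasurableSet {y : ℝ | ε ≤ |c - y|} :=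
    measurableSet_le measurable_const (measurable_const.sub measurable_id).abs
  have hmeas := hf.aestronglyMeasurable.div₀
    (by fun_prop : Continuous fun y : ℝ ↦ c - y).aestronglyMeasurable
  refine (hf.norm.div_const ε).integrableOn.mono' hmeas.restrict ?_
  filter_upwards [ae_restrict_mem hS] with y hy
  simp only [Real.norm_eq_abs, abs_div]
  exact div_le_div_of_nonneg_left (abs_nonneg _) hε hy

section PrincipalValue

variable {f R : ℝ → ℝ} {c A lbot ltop : ℝ}

lemma setIntegral_le_abs_sub_eq_of_hasDerivAt {ε : ℝ} (hε : 0 < ε)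
    (hf : IntegrableOn f {y | ε ≤ |c - y|})
    (hderiv : ∀ y ≠ c, HasDerivAt (fun y ↦ A * log (y - c) + R y) (f y) y)
    (hbot : Tendsto (fun y ↦ A * log (y - c) + R y) atBot (𝓝 lbot))
    (htop : Tendsto (fun y ↦ A * log (y - c) + R y) atTop (𝓝 ltop)) :
    ∫ y in {y | ε ≤ |c - y|}, f y = ltop - lbot + (R (c - ε) - R (c + ε)) := by
  rw [setOf_le_abs_sub_eq] at hf ⊢
  have hIic := hf.mono_set subset_union_left
  have hIci := hf.mono_set subset_union_right
  rw [setIntegral_union (Iic_disjoint_Ici.2 (by linarith)) measurableSet_Ici hIic hIci,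
    integral_Ici_eq_integral_Ioi,
    integral_Iic_of_hasDerivAt_of_tendsto' (fun y hy ↦ hderiv y (by grind)) hIic hbot,
    integral_Ioi_of_hasDerivAt_of_tendsto' (fun y hy ↦ hderiv y (by grind))
      (hIci.mono_set Ioi_subset_Ici_self) htop]
  -- `Real.log` is even, so the singular parts at `c ∓ ε` cancel.
  rw [show c - ε - c = -ε by ring, show c + ε - c = ε by ring, log_neg_eq_log]
  ring

lemma tendsto_setIntegral_le_abs_sub_of_hasDerivAt
    (hf : ∀ ε > 0, IntegrableOn f {y | ε ≤ |c - y|})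
    (hderiv : ∀ y ≠ c, HasDerivAt (fun y ↦ A * log (y - c) + R y) (f y) y)
    (hR : ContinuousAt R c)
    (hbot : Tendsto (fun y ↦ A * log (y - c) + R y) atBot (𝓝 lbot))
    (htop : Tendsto (fun y ↦ A * log (y - c) + R y) atTop (𝓝 ltop)) :
    Tendsto (fun ε ↦ ∫ y in {y | ε ≤ |c - y|}, f y) (𝓝[>] 0) (𝓝 (ltop - lbot)) := by
  have hshift : ∀ s : ℝ, Tendsto (fun ε ↦ R (c + s * ε)) (𝓝[>] 0) (𝓝 (R c)) := fun s ↦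
    hR.tendsto.comp <| tendsto_nhdsWithin_of_tendsto_nhds <| by
      simpa using (by fun_prop : Continuous fun ε : ℝ ↦ c + s * ε).tendsto' 0 c
        (by simp)
  have h := tendsto_const_nhds (x := ltop - lbot) |>.add ((hshift (-1)).sub (hshift 1))
  rw [sub_self, add_zero] at h
  refine h.congr' ?_
  filter_upwards [self_mem_nhdsWithin] with ε hε
  rw [setIntegral_le_abs_sub_eq_of_hasDerivAt hε (hf ε hε) hderiv hbot htop]
  simp [sub_eq_add_neg]

end PrincipalValue

lemma tendsto_inv_one_add_sq_cobounded :
    Tendsto (fun y : ℝ ↦ (1 + y ^ 2)⁻¹) (cobounded ℝ) (𝓝 0) := by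
  refine tendsto_inv_atTop_zero.comp <| tendsto_atTop_add_const_left _ 1 ?_
  have h := (tendsto_pow_atTop two_ne_zero).comp (tendsto_norm_cobounded_atTop (E := ℝ))
  simpa only [Function.comp_def, Real.norm_eq_abs, sq_abs] using h

lemma tendsto_div_one_add_sq_cobounded :
    Tendsto (fun y : ℝ ↦ y / (1 + y ^ 2)) (cobounded ℝ) (𝓝 0) := by
  have h := tendsto_inv₀_cobounded.mul (tendsto_const_nhds (x := (1 : ℝ)).sub
    tendsto_inv_one_add_sq_cobounded)
  rw [zero_mul] at h
  refine h.congr' ?_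
  filter_upwards [eventually_ne_cobounded 0] with y hy
  field_simp
  ring

namespace Q

lemma hasDerivAt (y : ℝ) : HasDerivAt Q (-8 * y / (1 + y ^ 2) ^ 2) y := by
  have h := (hasDerivAt_const y (4 : ℝ)).div ((hasDerivAt_pow 2 y).const_add 1) (by positivity)
  refine (h.congr_of_eventuallyEq (.of_eq rfl)).congr_deriv ?_
  norm_num
  ring

lemma deriv_eq (y : ℝ) : deriv Q y = -8 * y / (1 + y ^ 2) ^ 2 := (hasDerivAt y).deriv

lemma integrable_deriv : Integrable (deriv Q) := by
  refine (integrable_inv_one_add_sq.const_mul 8).mono' (by fun_prop) (ae_of_all _ fun y ↦ ?_)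
  have hy : |y| ≤ 1 + y ^ 2 := by nlinarith [abs_nonneg y, sq_abs y]
  have hpos : (0 : ℝ) < (1 + y ^ 2) ^ 2 := by positivity
  rw [deriv_eq, Real.norm_eq_abs, abs_div, abs_mul, abs_of_pos hpos]
  calc |(-8 : ℝ)| * |y| / (1 + y ^ 2) ^ 2 ≤ 8 * (1 + y ^ 2) / (1 + y ^ 2) ^ 2 := by
        norm_num; gcongr
    _ = 8 * (1 + y ^ 2)⁻¹ := by field_simp

/- Partial fractions: `Q' y / (c - y) = poleCoeff c / (y - c) + r y` with `r` rational and
without real poles; `regularPart c` is an antiderivative of `r`. -/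
noncomputable def poleCoeff (c : ℝ) : ℝ := 8 * c / (1 + c ^ 2) ^ 2

noncomputable def arctanCoeff (c : ℝ) : ℝ := 4 * (1 - c ^ 2) / (1 + c ^ 2) ^ 2

noncomputable def regularPart (c y : ℝ) : ℝ :=
  -(poleCoeff c / 2) * log (1 + y ^ 2) + arctanCoeff c * arctan y
    + 4 * (y + c) / ((1 + c ^ 2) * (1 + y ^ 2))

lemma continuous_regularPart (c : ℝ) : Continuous (regularPart c) := by
  have : ∀ y : ℝ, 1 + y ^ 2 ≠ 0 := fun y ↦ by positivity
  unfold regularPart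
  fun_prop (disch := simp [this])

lemma hasDerivAt_antideriv (c : ℝ) {y : ℝ} (hy : y ≠ c) :
    HasDerivAt (fun y ↦ poleCoeff c * log (y - c) + regularPart c y)
      (deriv Q y / (c - y)) y := by
  have hsq : HasDerivAt (fun y : ℝ ↦ 1 + y ^ 2) (2 * y) y := by
    simpa using (hasDerivAt_pow 2 y).const_add 1
  have hne : 1 + y ^ 2 ≠ 0 := by positivity
  have hc : 1 + c ^ 2 ≠ 0 := by positivity
  have hlog := ((hasDerivAt_id' y).sub_const c).log (sub_ne_zero.2 hy)
  have h := (hlog.const_mul (poleCoeff c)).add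
      (((hsq.log hne).const_mul (-(poleCoeff c / 2))).add
        ((hasDerivAt_arctan y).const_mul (arctanCoeff c)) |>.add
        ((((hasDerivAt_id' y).add_const c).const_mul 4).div (hsq.const_mul (1 + c ^ 2))
          (by simp [hne, hc])))
  refine (h.congr_of_eventuallyEq (.of_eq rfl)).congr_deriv ?_
  have hyc : y - c ≠ 0 := sub_ne_zero.2 hy
  have hcy : c - y ≠ 0 := sub_ne_zero.2 hy.symm
  simp only [deriv_eq, poleCoeff, arctanCoeff]
  field_simp
  ring

lemma tendsto_antideriv_sub_arctan (c : ℝ) :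
    Tendsto (fun y ↦ poleCoeff c * log (y - c) + regularPart c y - arctanCoeff c * arctan y)
      (cobounded ℝ) (𝓝 0) := by
  have hratio : Tendsto (fun y : ℝ ↦ (y - c) ^ 2 / (1 + y ^ 2)) (cobounded ℝ) (𝓝 1) := by
    have h := ((tendsto_div_one_add_sq_cobounded.const_mul (-2 * c)).add
      (tendsto_inv_one_add_sq_cobounded.const_mul (c ^ 2 - 1))).const_add 1
    rw [mul_zero, mul_zero, add_zero, add_zero] at h
    refine h.congr fun y ↦ ?_
    field_simp
    ring
  have hlog := ((continuousAt_log one_ne_zero).tendsto.comp hratio).const_mul (poleCoeff c / 2)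
  have hrat := ((tendsto_div_one_add_sq_cobounded.add
    (tendsto_inv_one_add_sq_cobounded.const_mul c)).const_mul (4 / (1 + c ^ 2)))
  have h := hlog.add hrat
  rw [log_one, mul_zero, mul_zero, add_zero, mul_zero, add_zero] at h
  refine h.congr' ?_
  filter_upwards [eventually_ne_cobounded c] with y hy
  have hne : 1 + y ^ 2 ≠ 0 := by positivity
  simp only [Function.comp_apply, regularPart]
  rw [log_div (pow_ne_zero 2 (sub_ne_zero.2 hy)) hne, log_pow]
  field_simp
  ring

lemma tendsto_setIntegral_deriv_div (c : ℝ) :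
    Tendsto (fun ε ↦ ∫ y in {y | ε ≤ |c - y|}, deriv Q y / (c - y)) (𝓝[>] 0)
      (𝓝 (π * arctanCoeff c)) := by
  have hlim : ∀ {l : Filter ℝ} {a : ℝ}, l ≤ cobounded ℝ → Tendsto arctan l (𝓝 a) →
      Tendsto (fun y ↦ poleCoeff c * log (y - c) + regularPart c y) l
        (𝓝 (0 + arctanCoeff c * a)) := fun hl ha ↦
    ((tendsto_antideriv_sub_arctan c).mono_left hl).add (ha.const_mul _) |>.congr
      fun y ↦ sub_add_cancel _ _
  have h := tendsto_setIntegral_le_abs_sub_of_hasDerivAt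
    (fun ε hε ↦ integrableOn_div_sub_of_le_abs integrable_deriv c hε)
    (fun y hy ↦ hasDerivAt_antideriv c hy) (continuous_regularPart c).continuousAt
    (hlim IsOrderBornology.atBot_le_cobounded
      (tendsto_arctan_atBot.mono_right nhdsWithin_le_nhds))
    (hlim IsOrderBornology.atTop_le_cobounded
      (tendsto_arctan_atTop.mono_right nhdsWithin_le_nhds))
  convert h using 2
  ring

lemma hilbertT_deriv (c : ℝ) : hilbertT (deriv Q) c = -arctanCoeff c := by
  rw [hilbertT, (tendsto_setIntegral_deriv_div c).limUnder_eq]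
  field_simp

end Q

theorem soliton_equation (x : ℝ) : -hilbertT (deriv Q) x + Q x - (1 / 2) * Q x ^ 2 = 0 := by
  rw [Q.hilbertT_deriv, Q.arctanCoeff, Q]
  field_simp
  ring
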